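/- arXiv:1209.3980 — 2 statements merged into one kernel-verified Lean document; each statement's English description precedes it below -/
import Mathlib

section
/- Let A be an abelian group and let Φ, Ψ : P^n → A be simple valuations. If Φ(P) = Ψ(P) for all P ∈ P^n_o, then Φ = Ψ (i.e. a simple valuation on P^n is determined by its values on P^n_o). -/
open MeasureTheory Metric
open scoped RealInnerProductSpace Pointwise

noncomputable section

/-- Euclidean `n`-space. -/
abbrev Eucl (n : ℕ) : Type := EuclideanSpace ℝ (Fin n)

/-- A convex body: a nonempty compact convex subset of `ℝⁿ`. -/
def IsConvexBody {n : ℕ} (K : Set (Eucl n)) : Prop :=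
  K.Nonempty ∧ IsCompact K ∧ Convex ℝ K

/-- A convex body containing the origin. -/
def IsConvexBodyO {n : ℕ} (K : Set (Eucl n)) : Prop :=
  IsConvexBody K ∧ (0 : Eucl n) ∈ K

/-- A convex polytope: the convex hull of a finite nonempty set of points. -/
def IsPolytope {n : ℕ} (P : Set (Eucl n)) : Prop :=
  ∃ S : Finset (Eucl n), S.Nonempty ∧ P = convexHull ℝ (S : Set (Eucl n))

/-- A convex polytope containing the origin. -/
def IsPolytopeO {n : ℕ} (P : Set (Eucl n)) : Prop :=
  IsPolytope P ∧ (0 : Eucl n) ∈ P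

/-- The support function `h(K, u) = sup_{x ∈ K} ⟨x, u⟩`. -/
def suppFn {n : ℕ} (K : Set (Eucl n)) (u : Eucl n) : ℝ :=
  sSup ((fun x => ⟪x, u⟫) '' K)

/-- The dimension of a convex set: the dimension of its affine hull. -/
def setDim {n : ℕ} (P : Set (Eucl n)) : ℕ :=
  Module.finrank ℝ (affineSpan ℝ P).direction

/-- `h(I_p⁺ K, u)^p = max_{x ∈ K} ⟨x, u⟩₊^p`. -/
def IppF {n : ℕ} (p : ℝ) (K : Set (Eucl n)) (u : Eucl n) : ℝ :=
  sSup ((fun x => (max ⟪x, u⟫ 0) ^ p) '' K)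

/-- `h(I_p⁻ K, u)^p = max_{x ∈ K} ⟨x, u⟩₋^p`. -/
def ImpF {n : ℕ} (p : ℝ) (K : Set (Eucl n)) (u : Eucl n) : ℝ :=
  sSup ((fun x => (max (-⟪x, u⟫) 0) ^ p) '' K)

/-- `(J_p⁺ K)(u) = min_{x ∈ K} ⟨x, u⟩₊^p`. -/
def JppF {n : ℕ} (p : ℝ) (K : Set (Eucl n)) (u : Eucl n) : ℝ :=
  sInf ((fun x => (max ⟪x, u⟫ 0) ^ p) '' K)

/-- `(J_p⁻ K)(u) = min_{x ∈ K} ⟨x, u⟩₋^p`. -/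
def JmpF {n : ℕ} (p : ℝ) (K : Set (Eucl n)) (u : Eucl n) : ℝ :=
  sInf ((fun x => (max (-⟪x, u⟫) 0) ^ p) '' K)

/-- The face `F(K, v) = {x ∈ K : ⟨x, v⟩ = h(K, v)}`. -/
def face {n : ℕ} (K : Set (Eucl n)) (v : Eucl n) : Set (Eucl n) :=
  {x ∈ K | ⟪x, v⟫ = suppFn K v}

/-- `h(E_p⁺ K, u)^p = (1/2) Σ_{v ∈ S¹, h(K,v) = 0} max_{x ∈ F(K,v)} ⟨x, u⟩₊^p`. -/
def EppF {n : ℕ} (p : ℝ) (K : Set (Eucl n)) (u : Eucl n) : ℝ :=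
  (1 / 2) * ∑' v : {v : Eucl n // ‖v‖ = 1 ∧ suppFn K v = 0},
    sSup ((fun x => (max ⟪x, u⟫ 0) ^ p) '' face K v.1)

/-- `h(E_p⁻ K, u)^p = (1/2) Σ_{v ∈ S¹, h(K,v) = 0} max_{x ∈ F(K,v)} ⟨x, u⟩₋^p`. -/
def EmpF {n : ℕ} (p : ℝ) (K : Set (Eucl n)) (u : Eucl n) : ℝ :=
  (1 / 2) * ∑' v : {v : Eucl n // ‖v‖ = 1 ∧ suppFn K v = 0},
    sSup ((fun x => (max (-⟪x, u⟫) 0) ^ p) '' face K v.1)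

/-- `(F_p⁺ K)(u) = (1/2) Σ_{v ∈ S¹, h(K,v) = 0} min_{x ∈ F(K,v)} ⟨x, u⟩₊^p`. -/
def FppF {n : ℕ} (p : ℝ) (K : Set (Eucl n)) (u : Eucl n) : ℝ :=
  (1 / 2) * ∑' v : {v : Eucl n // ‖v‖ = 1 ∧ suppFn K v = 0},
    sInf ((fun x => (max ⟪x, u⟫ 0) ^ p) '' face K v.1)

/-- `(F_p⁻ K)(u) = (1/2) Σ_{v ∈ S¹, h(K,v) = 0} min_{x ∈ F(K,v)} ⟨x, u⟩₋^p`. -/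
def FmpF {n : ℕ} (p : ℝ) (K : Set (Eucl n)) (u : Eucl n) : ℝ :=
  (1 / 2) * ∑' v : {v : Eucl n // ‖v‖ = 1 ∧ suppFn K v = 0},
    sInf ((fun x => (max (-⟪x, u⟫) 0) ^ p) '' face K v.1)

/-- The maximum norm over the unit sphere. -/
def sphSup {n : ℕ} (f : Eucl n → ℝ) : ℝ :=
  ⨆ u : Metric.sphere (0 : Eucl n) 1, |f u.1|

/-- The standard simplex `Tⁿ = conv{o, e₁, …, e_n}`. -/
def stdT (n : ℕ) : Set (Eucl n) :=
  convexHull ℝ (insert (0 : Eucl n) (Set.range fun i : Fin n => EuclideanSpace.single i (1 : ℝ)))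

/-- The simplex `T̃ⁿ⁻¹ = conv{e₁, …, e_n}`. -/
def tilT (n : ℕ) : Set (Eucl n) :=
  convexHull ℝ (Set.range fun i : Fin n => EuclideanSpace.single i (1 : ℝ))


/-!
Let `D = Φ - Ψ`: a simple valuation vanishing on every polytope that contains the origin. If
`dim P < n` then `D P = 0` by simplicity. Otherwise `P` is an intersection of finitely many
half-spaces `H₁, …, H_m` (tilt a hyperplane separating a point from `P` until it is spanned by
vertices of `P`), so `P = conv ({0} ∪ P) ∩ H₁ ∩ ⋯ ∩ H_m`, and `D` vanishes on every set
`conv ({0} ∪ R) ∩ H₁ ∩ ⋯ ∩ H_m` by induction on `m`. With `Y = conv ({0} ∪ R) ∩ H₂ ∩ ⋯ ∩ H_m`: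
if `0 ∈ H₁`, then `X = Y ∩ H₁` satisfies `X = conv ({0} ∪ X) ∩ H₂ ∩ ⋯ ∩ H_m`. Otherwise the
boundary of `H₁` cuts `Y` into `Y ∩ H₁` and a piece `X` on the side of the origin, again with
`X = conv ({0} ∪ X) ∩ H₂ ∩ ⋯ ∩ H_m`; since `D` is simple the cut is additive, so
`D (Y ∩ H₁) = D Y - D X = 0`.
-/

section Crossing

variable {E : Type*} [AddCommGroup E] [Module ℝ E] (f : Module.Dual ℝ E) (c : ℝ)

def levelCrossing (a b : E) : E :=
  AffineMap.lineMap a b ((c - f a) / (f b - f a))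

variable {f c}

lemma apply_levelCrossing {a b : E} (h : f a ≠ f b) : f (levelCrossing f c a b) = c := by
  have : f b - f a ≠ 0 := sub_ne_zero.2 h.symm
  rw [levelCrossing, AffineMap.lineMap_apply_module, map_add, map_smul, map_smul, smul_eq_mul,
    smul_eq_mul]
  field_simp
  ring

lemma levelCrossing_comm {a b : E} (h : f a ≠ f b) :
    levelCrossing f c a b = levelCrossing f c b a := by
  have : f b - f a ≠ 0 := sub_ne_zero.2 h.symm
  have : f a - f b ≠ 0 := sub_ne_zero.2 h
  simp only [levelCrossing, AffineMap.lineMap_apply_module]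
  match_scalars <;> field_simp <;> ring

lemma levelCrossing_mem_segment {a b : E} (ha : f a ≤ c) (hb : c < f b) :
    levelCrossing f c a b ∈ segment ℝ a b := by
  have hab : 0 < f b - f a := by linarith
  exact lineMap_mem_segment (𝕜 := ℝ) a b
    ⟨div_nonneg (by linarith) hab.le, (div_le_one hab).2 (by linarith)⟩

lemma segment_inter_halfSpace_subset {a b : E} (ha : f a ≤ c) (hb : c < f b) :
    segment ℝ a b ∩ {y | f y ≤ c} ⊆ segment ℝ a (levelCrossing f c a b) := by
  rintro x ⟨⟨s, t, hs, ht, hst, rfl⟩, hx⟩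
  obtain rfl : s = 1 - t := by linarith
  have hab : 0 < f b - f a := by linarith
  have htt₀ : t ≤ (c - f a) / (f b - f a) := by
    rw [le_div_iff₀ hab]
    simp only [Set.mem_ofPred_eq, map_add, map_smul, smul_eq_mul] at hx
    linarith
  rcases ht.eq_or_lt with rfl | ht
  · simpa using left_mem_segment ℝ a _
  have ht₀ : 0 < (c - f a) / (f b - f a) := ht.trans_le htt₀
  have : c - f a ≠ 0 := (div_pos_iff_of_pos_right hab).1 ht₀ |>.ne'
  refine ⟨1 - t / ((c - f a) / (f b - f a)), t / ((c - f a) / (f b - f a)),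
    by linarith [(div_le_one ht₀).2 htt₀], by positivity, by ring, ?_⟩
  simp only [levelCrossing, AffineMap.lineMap_apply_module]
  match_scalars <;> field_simp; ring

lemma levelCrossing_mem_segment_of_mem_segment {o y₁ y₂ y : E} (h₁ : f o < f y₁)
    (h₂ : f o < f y₂) (hy : y ∈ segment ℝ y₁ y₂) :
    levelCrossing f c o y ∈
      segment ℝ (levelCrossing f c o y₁) (levelCrossing f c o y₂) := by
  obtain ⟨s, t, hs, ht, hst, rfl⟩ := hy
  obtain rfl : s = 1 - t := by linarith
  have hd₁ : 0 < f y₁ - f o := by linarith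
  have hd₂ : 0 < f y₂ - f o := by linarith
  have hfy :
      f ((1 - t) • y₁ + t • y₂) - f o = (1 - t) * (f y₁ - f o) + t * (f y₂ - f o) := by
    simp only [map_add, map_smul, smul_eq_mul]; ring
  have hd : 0 < (1 - t) * (f y₁ - f o) + t * (f y₂ - f o) := by
    rw [← hfy, sub_pos]
    exact convex_halfSpace_gt f.isLinear _ h₁ h₂ hs ht hst
  refine ⟨(1 - t) * (f y₁ - f o) / ((1 - t) * (f y₁ - f o) + t * (f y₂ - f o)),
    t * (f y₂ - f o) / ((1 - t) * (f y₁ - f o) + t * (f y₂ - f o)),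
    by positivity, by positivity, by field_simp, ?_⟩
  have := hd.ne'
  have := hd₁.ne'
  have := hd₂.ne'
  simp only [levelCrossing, AffineMap.lineMap_apply_module', hfy]
  match_scalars <;> field_simp; ring

lemma levelCrossing_mem_convexHull_image {o : E} {Q : Set E} (hQ : ∀ y ∈ Q, f o < f y) {y : E}
    (hy : y ∈ convexHull ℝ Q) :
    levelCrossing f c o y ∈ convexHull ℝ (levelCrossing f c o '' Q) := by
  let K := {y | f o < f y ∧ levelCrossing f c o y ∈ convexHull ℝ (levelCrossing f c o '' Q)}
  have hK : Convex ℝ K := by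
    rintro y₁ ⟨h₁, hK₁⟩ y₂ ⟨h₂, hK₂⟩ s t hs ht hst
    exact ⟨convex_halfSpace_gt f.isLinear _ h₁ h₂ hs ht hst,
      (convex_convexHull ℝ _).segment_subset hK₁ hK₂
        (levelCrossing_mem_segment_of_mem_segment h₁ h₂ ⟨s, t, hs, ht, hst, rfl⟩)⟩
  have hQK : Q ⊆ K := fun y hy =>
    ⟨hQ y hy, subset_convexHull ℝ _ (Set.mem_image_of_mem _ hy)⟩
  exact (convexHull_min hQK hK hy).2

lemma levelCrossing_neg : levelCrossing (-f) (-c) = levelCrossing f c := by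
  ext a b
  simp only [levelCrossing, LinearMap.neg_apply, sub_neg_eq_add]
  congr 1
  rw [← neg_div_neg_eq]
  ring_nf

/-- One step of Fourier–Motzkin elimination. -/
theorem convexHull_inter_halfSpace (S : Set E) :
    convexHull ℝ S ∩ {y | f y ≤ c} = convexHull ℝ (S ∩ {y | f y ≤ c} ∪
      Set.image2 (levelCrossing f c) (S ∩ {y | f y ≤ c}) (S ∩ {y | c < f y})) := by
  set G := S ∩ {y | f y ≤ c}
  set B := S ∩ {y | c < f y}
  set M := Set.image2 (levelCrossing f c) G B
  apply Set.Subset.antisymm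
  · rintro x ⟨hx, hxc⟩
    have hS : S = G ∪ B := by
      ext y
      simp only [G, B, ← Set.inter_union_distrib_left, Set.mem_inter_iff, Set.mem_union,
        Set.mem_ofPred_eq]
      exact ⟨fun hy => ⟨hy, le_or_gt _ _⟩, And.left⟩
    rcases B.eq_empty_or_nonempty with hB | hB
    · rw [hS, hB, Set.union_empty] at hx
      exact convexHull_mono Set.subset_union_left hx
    rcases G.eq_empty_or_nonempty with hG | hG
    · rw [hS, hG, Set.empty_union] at hx
      have hcx : c < f x :=
        convexHull_min Set.inter_subset_right (convex_halfSpace_gt f.isLinear c) hx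
      exact absurd hxc hcx.not_ge
    rw [hS, convexHull_union hG hB, mem_convexJoin] at hx
    obtain ⟨g, hg, b, hb, hxgb⟩ := hx
    have hgc : f g ≤ c :=
      convexHull_min Set.inter_subset_right (convex_halfSpace_le f.isLinear c) hg
    have hbc : c < f b :=
      convexHull_min Set.inter_subset_right (convex_halfSpace_gt f.isLinear c) hb
    have hGM : levelCrossing f c b '' G ⊆ convexHull ℝ M := by
      rintro _ ⟨g', hg', rfl⟩
      rw [← levelCrossing_comm (hg'.2.trans_lt hbc).ne]
      refine convexHull_mono ?_ (levelCrossing_mem_convexHull_image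
        (fun y hy => hg'.2.trans_lt hy.2) hb)
      rintro _ ⟨b', hb', rfl⟩
      exact Set.mem_image2_of_mem hg' hb'
    have hz : levelCrossing f c g b ∈ convexHull ℝ M := by
      have h := levelCrossing_mem_convexHull_image (f := -f) (c := -c) (o := b)
        (fun y hy => neg_lt_neg (hy.2.trans_lt hbc)) hg
      rw [levelCrossing_neg] at h
      rw [levelCrossing_comm (hgc.trans_lt hbc).ne]
      exact convexHull_min hGM (convex_convexHull ℝ M) h
    exact (convex_convexHull ℝ _).segment_subset
      (convexHull_mono Set.subset_union_left hg) (convexHull_mono Set.subset_union_right hz)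
      (segment_inter_halfSpace_subset hgc hbc ⟨hxgb, hxc⟩)
  · refine convexHull_min ?_ ((convex_convexHull ℝ S).inter (convex_halfSpace_le f.isLinear c))
    rintro _ (hy | ⟨a, ha, b, hb, rfl⟩)
    · exact ⟨subset_convexHull ℝ S hy.1, hy.2⟩
    · exact ⟨segment_subset_convexHull ha.1 hb.1 (levelCrossing_mem_segment ha.2 hb.2),
        (apply_levelCrossing (ha.2.trans_lt hb.2).ne).le⟩

end Crossing

section Polyhedron

variable {E : Type*} [AddCommGroup E] [Module ℝ E]

def polyhedron (l : List (Module.Dual ℝ E × ℝ)) : Set E :=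
  {y | ∀ p ∈ l, p.1 y ≤ p.2}

@[simp] lemma polyhedron_nil : polyhedron ([] : List (Module.Dual ℝ E × ℝ)) = Set.univ := by
  simp [polyhedron]

lemma polyhedron_cons (p : Module.Dual ℝ E × ℝ) (l : List (Module.Dual ℝ E × ℝ)) :
    polyhedron (p :: l) = polyhedron l ∩ {y | p.1 y ≤ p.2} := by
  ext y
  simp [polyhedron, and_comm]

lemma convex_polyhedron (l : List (Module.Dual ℝ E × ℝ)) : Convex ℝ (polyhedron l) := by
  induction l with
  | nil => simpa using convex_univ
  | cons p l ih => rw [polyhedron_cons]; exact ih.inter (convex_halfSpace_le p.1.isLinear p.2)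

end Polyhedron


section AffineSpan

variable {E : Type*} [AddCommGroup E] [Module ℝ E]

lemma apply_eq_of_mem_affineSpan {T : Set E} {f : Module.Dual ℝ E} {c : ℝ}
    (hT : ∀ t ∈ T, f t = c) {y : E} (hy : y ∈ affineSpan ℝ T) : f y = c := by
  refine affineSpan_induction hy hT fun r a b z ha hb hz => ?_
  simp only [vsub_eq_sub, vadd_eq_add, map_add, map_smul, map_sub, ha, hb, hz, sub_self,
    smul_zero, zero_add]

lemma exists_apply_ne_of_affineSpan_eq_top {S : Set E} (hS : affineSpan ℝ S = ⊤)
    {v : Module.Dual ℝ E} (hv : v ≠ 0) (x : E) : ∃ s ∈ S, v s ≠ v x := by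
  by_contra! h
  refine hv (LinearMap.ext fun y => ?_)
  have := apply_eq_of_mem_affineSpan h (hS ▸ AffineSubspace.mem_top ℝ E (y + x))
  simpa using this

lemma setOf_apply_eq_eq_affineSpan {T : Set E} {f : Module.Dual ℝ E} {c : ℝ}
    (hT : ∀ t ∈ T, f t = c) {x : E} (hx : f x ≠ c)
    (hspan : affineSpan ℝ (insert x T) = ⊤) :
    {y | f y = c} = affineSpan ℝ T := by
  refine Set.Subset.antisymm (fun y hy => ?_) fun y hy => apply_eq_of_mem_affineSpan hT hy
  have hy' : y ∈ affineSpan ℝ (insert x T) := hspan ▸ AffineSubspace.mem_top ℝ E y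
  rcases T.eq_empty_or_nonempty with rfl | ⟨t, ht⟩
  · rw [insert_empty_eq, AffineSubspace.mem_affineSpan_singleton] at hy'
    exact absurd (hy' ▸ hy) hx
  rw [← affineSpan_insert_affineSpan,
    AffineSubspace.mem_affineSpan_insert_iff (subset_affineSpan ℝ T ht)] at hy'
  obtain ⟨r, p, hp, rfl⟩ := hy'
  have hfp := apply_eq_of_mem_affineSpan hT hp
  have hr : r * (f x - c) = 0 := by
    have : f (r • (x -ᵥ t) +ᵥ p) = c := hy
    simp only [vsub_eq_sub, vadd_eq_add, map_add, map_smul, map_sub, hT t ht, hfp,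
      smul_eq_mul] at this
    linarith
  rw [(mul_eq_zero.1 hr).resolve_right (sub_ne_zero.2 hx), zero_smul, zero_vadd]
  exact hp

lemma setOf_le_subset_of_setOf_eq_eq {f f' : Module.Dual ℝ E} {c c' : ℝ}
    (h : {y | f y = c} = {y | f' y = c'}) {p : E} (hp : f p < c) (hp' : f' p < c') :
    {y | f' y ≤ c'} ⊆ {y | f y ≤ c} := by
  intro y (hy : f' y ≤ c')
  change f y ≤ c
  by_contra! hyc
  have hm : f' (levelCrossing f c p y) = c' := by
    have : levelCrossing f c p y ∈ {y | f y = c} := apply_levelCrossing (hp.trans hyc).ne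
    rwa [h] at this
  have hd : 0 < f y - f p := by linarith
  have ht : (c - f p) / (f y - f p) < 1 := (div_lt_one hd).2 (by linarith)
  have ht' : 0 < (c - f p) / (f y - f p) := div_pos (by linarith) hd
  simp only [levelCrossing, AffineMap.lineMap_apply_module, map_add, map_smul,
    smul_eq_mul] at hm
  nlinarith

end AffineSpan

section Tilting

open Finset

variable {E : Type*} [AddCommGroup E] [Module ℝ E] {S : Finset E} {u : Module.Dual ℝ E}
  {c : ℝ} {x : E}

/-- Rotating the half-space `{u ≤ c}` about its intersection with the level set
`{w = w x}` until it hits a further point of `S`. -/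
lemma exists_tilt (hSu : ∀ s ∈ S, u s ≤ c) (hx : c < u x) {w : Module.Dual ℝ E}
    (hw : ∀ s ∈ S, u s = c → w s = w x) (hB : ∃ s ∈ S, w x < w s) :
    ∃ (u' : Module.Dual ℝ E) (c' : ℝ), (∀ s ∈ S, u' s ≤ c') ∧ c' < u' x ∧
      #{s ∈ S | u' s < c'} < #{s ∈ S | u s < c} := by
  have hBne : {s ∈ S | w x < w s}.Nonempty := by simpa [Finset.filter_nonempty_iff] using hB
  have hstrict : ∀ s ∈ S, w x < w s → u s < c := fun s hs hws =>
    (hSu s hs).lt_of_ne fun h => (hw s hs h ▸ hws).false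
  obtain ⟨m, hmB, hmin⟩ := exists_min_image _ (fun s => (c - u s) / (w s - w x)) hBne
  obtain ⟨hmS, hmw⟩ := mem_filter.1 hmB
  set τ := (c - u m) / (w m - w x)
  have hτ : 0 < τ := div_pos (by linarith [hstrict m hmS hmw]) (by linarith)
  have hτm : τ * (w m - w x) = c - u m := div_mul_cancel₀ _ (by linarith)
  refine ⟨u + τ • w, c + τ * w x, fun s hs => ?_, ?_, card_lt_card ?_⟩
  · simp only [LinearMap.add_apply, LinearMap.smul_apply, smul_eq_mul]
    by_cases hws : w x < w s
    · have := hmin s (mem_filter.2 ⟨hs, hws⟩)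
      rw [le_div_iff₀ (by linarith)] at this
      linarith
    · nlinarith [hSu s hs]
  · simp only [LinearMap.add_apply, LinearMap.smul_apply, smul_eq_mul]
    linarith
  · refine (ssubset_iff_of_subset fun s hs => ?_).2
      ⟨m, mem_filter.2 ⟨hmS, hstrict m hmS hmw⟩, ?_⟩
    · obtain ⟨hs, hlt⟩ := mem_filter.1 hs
      simp only [LinearMap.add_apply, LinearMap.smul_apply, smul_eq_mul] at hlt
      refine mem_filter.2 ⟨hs, (hSu s hs).lt_of_ne fun h => ?_⟩
      rw [h, hw s hs h] at hlt
      exact hlt.false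
    · simp only [mem_filter, LinearMap.add_apply, LinearMap.smul_apply, smul_eq_mul, not_and,
        not_lt]
      intro _
      linarith

lemma exists_tilt_of_affineSpan_ne_top (hS : affineSpan ℝ (S : Set E) = ⊤)
    (hSu : ∀ s ∈ S, u s ≤ c) (hx : c < u x)
    (hT : affineSpan ℝ (insert x ↑{s ∈ S | u s = c}) ≠ ⊤) :
    ∃ (u' : Module.Dual ℝ E) (c' : ℝ), (∀ s ∈ S, u' s ≤ c') ∧ c' < u' x ∧
      #{s ∈ S | u' s < c'} < #{s ∈ S | u s < c} := by
  have hx_mem : x ∈ affineSpan ℝ (insert x ↑{s ∈ S | u s = c}) :=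
    mem_affineSpan ℝ (Set.mem_insert _ _)
  have hdir : (affineSpan ℝ (insert x ↑{s ∈ S | u s = c})).direction ≠ ⊤ := by
    rwa [Ne, AffineSubspace.direction_eq_top_iff_of_nonempty ⟨x, hx_mem⟩]
  obtain ⟨v, hv, hle⟩ := Submodule.exists_le_ker_of_lt_top _ (lt_top_iff_ne_top.2 hdir)
  have hvT : ∀ s ∈ S, u s = c → v s = v x := fun s hs h => by
    have hs_mem : s ∈ affineSpan ℝ (insert x ↑{s ∈ S | u s = c}) :=
      mem_affineSpan ℝ (Set.mem_insert_of_mem _ (mem_filter.2 ⟨hs, h⟩))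
    simpa [sub_eq_zero] using hle (AffineSubspace.vsub_mem_direction hs_mem hx_mem)
  obtain ⟨s, hs, hne⟩ := exists_apply_ne_of_affineSpan_eq_top hS hv x
  rcases hne.lt_or_gt with hlt | hgt
  · exact exists_tilt hSu hx (w := -v) (fun s hs h => by simp [hvT s hs h])
      ⟨s, hs, by simpa using hlt⟩
  · exact exists_tilt hSu hx hvT ⟨s, hs, hgt⟩

lemma exists_halfSpace_affineSpan_insert_eq_top (hS : affineSpan ℝ (S : Set E) = ⊤)
    (hSu : ∀ s ∈ S, u s ≤ c) (hx : c < u x) :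
    ∃ (u' : Module.Dual ℝ E) (c' : ℝ), (∀ s ∈ S, u' s ≤ c') ∧ c' < u' x ∧
      affineSpan ℝ (insert x ↑{s ∈ S | u' s = c'}) = ⊤ := by
  induction h : #{s ∈ S | u s < c} using Nat.strong_induction_on generalizing u c with
  | _ k ih =>
    by_cases hT : affineSpan ℝ (insert x ↑{s ∈ S | u s = c}) = ⊤
    · exact ⟨u, c, hSu, hx, hT⟩
    obtain ⟨u', c', hSu', hx', hlt⟩ := exists_tilt_of_affineSpan_ne_top hS hSu hx hT
    exact ih _ (h ▸ hlt) hSu' hx' rfl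

end Tilting

open Classical in
/-- One half of the Minkowski–Weyl theorem. The half-spaces are those bounded by hyperplanes
spanned by vertices. -/
theorem exists_polyhedron_eq_convexHull {E : Type*} [NormedAddCommGroup E] [NormedSpace ℝ E]
    {S : Finset E} (hS : affineSpan ℝ (S : Set E) = ⊤) :
    ∃ l : List (Module.Dual ℝ E × ℝ), polyhedron l = convexHull ℝ S := by
  let IsFacet (T : Finset E) (p : Module.Dual ℝ E × ℝ) : Prop :=
    (∀ s ∈ S, p.1 s ≤ p.2) ∧ {y | p.1 y = p.2} = affineSpan ℝ (T : Set E)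
  -- `0` encodes the trivial half-space `{y | 0 ≤ 0}`.
  let facet (T : Finset E) : Module.Dual ℝ E × ℝ :=
    if h : ∃ p, IsFacet T p then h.choose else 0
  have facet_spec : ∀ T p, IsFacet T p → IsFacet T (facet T) := fun T p hp => by
    simp only [facet, dif_pos (⟨p, hp⟩ : ∃ p, IsFacet T p)]
    exact Exists.choose_spec _
  have facet_le : ∀ T, ∀ s ∈ S, (facet T).1 s ≤ (facet T).2 := fun T s hs => by
    by_cases h : ∃ p, IsFacet T p
    · exact (facet_spec T _ h.choose_spec).1 s hs
    · have h0 : facet T = 0 := dif_neg h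
      simp [h0]
  refine ⟨S.powerset.toList.map facet, Set.Subset.antisymm (fun x hxl => ?_) ?_⟩
  · by_contra hxS
    obtain ⟨f, c₀, hfS, hfx⟩ := geometric_hahn_banach_closed_point (convex_convexHull ℝ _)
      (S.finite_toSet.isCompact_convexHull (𝕜 := ℝ)).isClosed hxS
    obtain ⟨u, c, hSu, hcx, hspan⟩ := exists_halfSpace_affineSpan_insert_eq_top hS
      (fun s hs => (hfS s (subset_convexHull ℝ _ hs)).le) hfx
    set T := {s ∈ S | u s = c}
    have hT : ∀ t ∈ (T : Set E), u t = c := fun t ht => (Finset.mem_filter.1 ht).2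
    have hhyp := setOf_apply_eq_eq_affineSpan hT hcx.ne' hspan
    obtain ⟨hfacetS, hfacet⟩ := facet_spec T (u, c) ⟨hSu, hhyp⟩
    obtain ⟨s, hs, hsc⟩ : ∃ s ∈ S, u s < c := by
      by_contra! h
      have hST : (S : Set E) ⊆ affineSpan ℝ (T : Set E) := fun s hs =>
        hhyp ▸ le_antisymm (hSu s hs) (h s hs)
      exact hcx.ne' (apply_eq_of_mem_affineSpan hT
        (affineSpan_le.2 hST (hS ▸ AffineSubspace.mem_top ℝ E x)))
    have hs' : (facet T).1 s < (facet T).2 := (hfacetS s hs).lt_of_ne fun h =>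
      hsc.ne (show s ∈ {y | u y = c} from hhyp ▸ hfacet ▸ h)
    have hTS : T ∈ S.powerset.toList :=
      Finset.mem_toList.2 (Finset.mem_powerset.2 (Finset.filter_subset _ _))
    have hxT : (facet T).1 x ≤ (facet T).2 := hxl _ (List.mem_map.2 ⟨T, hTS, rfl⟩)
    exact hcx.not_ge (setOf_le_subset_of_setOf_eq_eq (hhyp.trans hfacet.symm) hsc hs' hxT)
  · refine convexHull_min (fun s hs p hp => ?_) (convex_polyhedron _)
    obtain ⟨T, -, rfl⟩ := List.mem_map.1 hp
    exact facet_le T s hs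

lemma convexHull_insert_inter_inter_eq {E : Type*} [AddCommGroup E] [Module ℝ E] {x : E}
    {R K C : Set E} (hC : Convex ℝ C) (hx : x ∈ C) :
    convexHull ℝ (insert x (convexHull ℝ (insert x R) ∩ (K ∩ C))) ∩ K =
      convexHull ℝ (insert x R) ∩ (K ∩ C) := by
  refine Set.Subset.antisymm (fun y ⟨hy, hyK⟩ => ?_)
    fun y hy => ⟨subset_convexHull ℝ _ (Set.mem_insert_of_mem x hy), hy.2.1⟩
  have hR : insert x (convexHull ℝ (insert x R) ∩ (K ∩ C)) ⊆ convexHull ℝ (insert x R) :=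
    Set.insert_subset (subset_convexHull ℝ _ (Set.mem_insert x R)) Set.inter_subset_left
  have hC' : insert x (convexHull ℝ (insert x R) ∩ (K ∩ C)) ⊆ C :=
    Set.insert_subset hx fun z hz => hz.2.2
  exact ⟨convexHull_min hR (convex_convexHull ℝ _) hy, hyK, convexHull_min hC' hC hy⟩

section Polytope

variable {n : ℕ}

lemma IsPolytope.inter_halfSpace {P : Set (Eucl n)} (hP : IsPolytope P)
    (f : Module.Dual ℝ (Eucl n)) (c : ℝ) (hne : (P ∩ {y | f y ≤ c}).Nonempty) :
    IsPolytope (P ∩ {y | f y ≤ c}) := by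
  obtain ⟨S, -, rfl⟩ := hP
  rw [convexHull_inter_halfSpace] at hne ⊢
  have hfin : (↑S ∩ {y | f y ≤ c} ∪
      Set.image2 (levelCrossing f c) (↑S ∩ {y | f y ≤ c}) (↑S ∩ {y | c < f y})).Finite :=
    (S.finite_toSet.inter_of_left _).union
      ((S.finite_toSet.inter_of_left _).image2 _ (S.finite_toSet.inter_of_left _))
  refine ⟨hfin.toFinset, ?_, by rw [hfin.coe_toFinset]⟩
  rw [Set.Finite.toFinset_nonempty]
  exact convexHull_nonempty_iff.1 hne

lemma IsPolytope.inter_polyhedron {P : Set (Eucl n)} (hP : IsPolytope P)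
    (l : List (Module.Dual ℝ (Eucl n) × ℝ)) (hne : (P ∩ polyhedron l).Nonempty) :
    IsPolytope (P ∩ polyhedron l) := by
  induction l with
  | nil => simpa using hP
  | cons p l ih =>
    rw [polyhedron_cons, ← Set.inter_assoc] at hne ⊢
    exact (ih (hne.mono Set.inter_subset_left)).inter_halfSpace p.1 p.2 hne

lemma IsPolytope.convexHull_insert {P : Set (Eucl n)} (hP : IsPolytope P) (x : Eucl n) :
    IsPolytope (convexHull ℝ (insert x P)) := by
  obtain ⟨S, hS, rfl⟩ := hP
  refine ⟨insert x S, Finset.insert_nonempty x S, ?_⟩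
  rw [Finset.coe_insert, Set.insert_eq, Set.insert_eq, convexHull_convexHull_union_right]

lemma setDim_lt_of_subset_hyperplane {P : Set (Eucl n)} {f : Module.Dual ℝ (Eucl n)}
    (hf : f ≠ 0) {c : ℝ} (hP : P ⊆ {y | f y = c}) : setDim P < n := by
  have hdir : (affineSpan ℝ P).direction ≤ LinearMap.ker f := by
    rw [direction_affineSpan, vectorSpan_def, Submodule.span_le]
    rintro _ ⟨x, hx, y, hy, rfl⟩
    simp only [SetLike.mem_coe, LinearMap.mem_ker, vsub_eq_sub, map_sub]
    rw [(hP hx : f x = c), (hP hy : f y = c), sub_self]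
  have hker : LinearMap.ker f ≠ ⊤ := fun h => hf (LinearMap.ker_eq_top.1 h)
  calc setDim P ≤ Module.finrank ℝ (LinearMap.ker f) := Submodule.finrank_mono hdir
    _ < Module.finrank ℝ (Eucl n) := Submodule.finrank_lt hker
    _ = n := finrank_euclideanSpace_fin

lemma affineSpan_eq_top_of_not_setDim_lt {P : Set (Eucl n)} (hP : P.Nonempty)
    (h : ¬ setDim P < n) : affineSpan ℝ P = ⊤ := by
  rw [← AffineSubspace.direction_eq_top_iff_of_nonempty (hP.mono (subset_affineSpan ℝ P))]
  apply Submodule.eq_top_of_finrank_eq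
  have := Submodule.finrank_le (affineSpan ℝ P).direction
  rw [finrank_euclideanSpace_fin] at this ⊢
  exact le_antisymm this (not_lt.1 h)

end Polytope

section Valuation

variable {n : ℕ} {A : Type*} [AddCommGroup A]

structure IsSimpleValuation (D : Set (Eucl n) → A) : Prop where
  map_empty : D ∅ = 0
  map_union_add_map_inter : ∀ K L : Set (Eucl n), IsPolytope K → IsPolytope L →
    IsPolytope (K ∪ L) → D (K ∪ L) + D (K ∩ L) = D K + D L
  map_of_setDim_lt : ∀ P : Set (Eucl n), IsPolytope P → setDim P < n → D P = 0

namespace IsSimpleValuation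

variable {D : Set (Eucl n) → A} {R : Set (Eucl n)} {f : Module.Dual ℝ (Eucl n)}

lemma sub (hD : IsSimpleValuation D) {D' : Set (Eucl n) → A} (hD' : IsSimpleValuation D') :
    IsSimpleValuation (D - D') where
  map_empty := by simp [hD.map_empty, hD'.map_empty]
  map_union_add_map_inter K L hK hL hKL := by
    simp only [Pi.sub_apply]
    rw [sub_add_sub_comm, hD.map_union_add_map_inter K L hK hL hKL,
      hD'.map_union_add_map_inter K L hK hL hKL, sub_add_sub_comm]
  map_of_setDim_lt P hP hdim := by
    simp [hD.map_of_setDim_lt P hP hdim, hD'.map_of_setDim_lt P hP hdim]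

lemma map_inter_hyperplane (hD : IsSimpleValuation D) (hR : IsPolytope R) (hf : f ≠ 0)
    (c : ℝ) : D (R ∩ {y | f y = c}) = 0 := by
  rcases (R ∩ {y | f y = c}).eq_empty_or_nonempty with h | h
  · rw [h, hD.map_empty]
  have hsplit : R ∩ {y | f y = c} = R ∩ {y | f y ≤ c} ∩ {y | (-f) y ≤ -c} := by
    ext y
    simp only [Set.mem_inter_iff, Set.mem_ofPred_eq, LinearMap.neg_apply, neg_le_neg_iff]
    constructor
    · rintro ⟨hy, rfl⟩; exact ⟨⟨hy, le_rfl⟩, le_rfl⟩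
    · rintro ⟨⟨hy, h₁⟩, h₂⟩; exact ⟨hy, le_antisymm h₁ h₂⟩
  have hpoly : IsPolytope (R ∩ {y | f y = c}) := by
    rw [hsplit] at h ⊢
    exact (hR.inter_halfSpace f c (h.mono Set.inter_subset_left)).inter_halfSpace _ _ h
  exact hD.map_of_setDim_lt _ hpoly (setDim_lt_of_subset_hyperplane hf Set.inter_subset_right)

lemma map_eq_map_inter_le_add_map_inter_ge (hD : IsSimpleValuation D) (hR : IsPolytope R)
    (hf : f ≠ 0) (c : ℝ) : D R = D (R ∩ {y | f y ≤ c}) + D (R ∩ {y | c ≤ f y}) := by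
  have hunion : R ∩ {y | f y ≤ c} ∪ R ∩ {y | c ≤ f y} = R := by
    rw [← Set.inter_union_distrib_left, Set.inter_eq_left]
    exact fun y _ => le_total (f y) c
  have hinter : R ∩ {y | f y ≤ c} ∩ (R ∩ {y | c ≤ f y}) = R ∩ {y | f y = c} := by
    ext y
    simp only [Set.mem_inter_iff, Set.mem_ofPred_eq, le_antisymm_iff]
    tauto
  rcases (R ∩ {y | f y ≤ c}).eq_empty_or_nonempty with hK | hK
  · rw [hK, Set.empty_union] at hunion
    rw [hK, hD.map_empty, zero_add, hunion]
  rcases (R ∩ {y | c ≤ f y}).eq_empty_or_nonempty with hL | hL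
  · rw [hL, Set.union_empty] at hunion
    rw [hL, hD.map_empty, add_zero, hunion]
  have hL' : R ∩ {y | c ≤ f y} = R ∩ {y | (-f) y ≤ -c} := by simp [neg_le_neg_iff]
  have := hD.map_union_add_map_inter _ _ (hR.inter_halfSpace f c hK)
    (hL' ▸ hR.inter_halfSpace (-f) (-c) (hL' ▸ hL)) (by rw [hunion]; exact hR)
  rwa [hunion, hinter, hD.map_inter_hyperplane hR hf, add_zero] at this

theorem map_convexHull_insert_zero_inter_polyhedron (hD : IsSimpleValuation D)
    (hD₀ : ∀ P : Set (Eucl n), IsPolytope P → (0 : Eucl n) ∈ P → D P = 0)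
    (l : List (Module.Dual ℝ (Eucl n) × ℝ)) (hR : IsPolytope R) :
    D (convexHull ℝ (insert 0 R) ∩ polyhedron l) = 0 := by
  induction l generalizing R with
  | nil =>
    rw [polyhedron_nil, Set.inter_univ]
    exact hD₀ _ (hR.convexHull_insert 0) (subset_convexHull ℝ _ (Set.mem_insert 0 R))
  | cons p l ih =>
    have hpiece : ∀ q : Module.Dual ℝ (Eucl n) × ℝ, 0 ≤ q.2 →
        D (convexHull ℝ (insert 0 R) ∩ polyhedron (q :: l)) = 0 := by
      intro q hq
      rw [polyhedron_cons]
      rcases (convexHull ℝ (insert 0 R) ∩ (polyhedron l ∩ {y | q.1 y ≤ q.2})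
        ).eq_empty_or_nonempty with h | h
      · rw [h, hD.map_empty]
      rw [← convexHull_insert_inter_inter_eq (convex_halfSpace_le q.1.isLinear q.2)
        (show q.1 0 ≤ q.2 by simpa using hq)]
      refine ih ?_
      rw [← polyhedron_cons] at h ⊢
      exact (hR.convexHull_insert 0).inter_polyhedron _ h
    by_cases hc : 0 ≤ p.2
    · exact hpiece p hc
    rcases (convexHull ℝ (insert 0 R) ∩ polyhedron (p :: l)).eq_empty_or_nonempty
      with h | ⟨y, hyR, hyl⟩
    · rw [h, hD.map_empty]
    rw [polyhedron_cons] at hyl ⊢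
    have hf : p.1 ≠ 0 := fun hf => hc (by simpa [hf] using hyl.2)
    have hY := (hR.convexHull_insert 0).inter_polyhedron l ⟨y, hyR, hyl.1⟩
    have hcut := hD.map_eq_map_inter_le_add_map_inter_ge hY hf p.2
    have hrest := hpiece (-p.1, -p.2) (by linarith)
    rw [polyhedron_cons] at hrest
    simp only [LinearMap.neg_apply, neg_le_neg_iff] at hrest
    rw [ih hR, Set.inter_assoc, Set.inter_assoc, hrest, add_zero] at hcut
    exact hcut.symm

theorem map_eq_zero_of_forall_zero_mem (hD : IsSimpleValuation D)
    (hD₀ : ∀ P : Set (Eucl n), IsPolytope P → (0 : Eucl n) ∈ P → D P = 0)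
    {P : Set (Eucl n)} (hP : IsPolytope P) : D P = 0 := by
  by_cases hdim : setDim P < n
  · exact hD.map_of_setDim_lt P hP hdim
  obtain ⟨S, hS, rfl⟩ := hP
  have hspan : affineSpan ℝ (S : Set (Eucl n)) = ⊤ := by
    rw [← affineSpan_convexHull]
    exact affineSpan_eq_top_of_not_setDim_lt
      (convexHull_nonempty_iff.2 (Finset.coe_nonempty.2 hS)) hdim
  obtain ⟨l, hl⟩ := exists_polyhedron_eq_convexHull hspan
  have hP : convexHull ℝ (insert 0 (convexHull ℝ S)) ∩ polyhedron l = convexHull ℝ S := by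
    rw [hl, Set.inter_eq_right]
    exact (Set.subset_insert _ _).trans (subset_convexHull ℝ _)
  rw [← hP]
  exact hD.map_convexHull_insert_zero_inter_polyhedron hD₀ l ⟨S, hS, rfl⟩

end IsSimpleValuation

end Valuation

/-- A simple valuation on convex polytopes with values in an abelian
group is determined by its values on the polytopes containing the origin. -/
theorem statement_6 (n : ℕ) {A : Type*} [AddCommGroup A]
    (Φ Ψ : Set (Eucl n) → A) (hΦe : Φ ∅ = 0) (hΨe : Ψ ∅ = 0)
    (hΦ : ∀ K L : Set (Eucl n), IsPolytope K → IsPolytope L → IsPolytope (K ∪ L) →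
      Φ (K ∪ L) + Φ (K ∩ L) = Φ K + Φ L)
    (hΨ : ∀ K L : Set (Eucl n), IsPolytope K → IsPolytope L → IsPolytope (K ∪ L) →
      Ψ (K ∪ L) + Ψ (K ∩ L) = Ψ K + Ψ L)
    (hΦs : ∀ P : Set (Eucl n), IsPolytope P → setDim P < n → Φ P = 0)
    (hΨs : ∀ P : Set (Eucl n), IsPolytope P → setDim P < n → Ψ P = 0)
    (hagree : ∀ P : Set (Eucl n), IsPolytopeO P → Φ P = Ψ P) :
    ∀ P : Set (Eucl n), IsPolytope P → Φ P = Ψ P := by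
  intro P hP
  have hD : IsSimpleValuation (Φ - Ψ) :=
    (⟨hΦe, hΦ, hΦs⟩ : IsSimpleValuation Φ).sub ⟨hΨe, hΨ, hΨs⟩
  exact sub_eq_zero.1 <| hD.map_eq_zero_of_forall_zero_mem
    (fun P hP h0 => sub_eq_zero.2 (hagree P ⟨hP, h0⟩)) hP
end
end

section
/- Let p > 1. If c₁, c₂, c₃, c₄ ∈ R are such that the map from P² to C_p(R²) given by P ↦ c₁·(h(I_p⁺P,·)^p − h(E_p⁺P,·)^p) + c₂·(h(I_p⁻P,·)^p − h(E_p⁻P,·)^p) + c₃·(h(I_p⁺P,·)^p − h(E_p⁺P,·)^p + J_p⁺P − F_p⁺P) + c₄·(h(I_p⁻P,·)^p − h(E_p⁻P,·)^p + J_p⁻P − F_p⁻P) is continuous at the line segment [o, e₁], then c₁ = c₂ = c₃ = c₄ = 0. -/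
open MeasureTheory Metric
open scoped RealInnerProductSpace Pointwise

noncomputable section

/-!
On `S = [o, e₁]` the faces with normals `±e₂` are `S` itself, so `E_p^± S = I_p^± S` and
`F_p^± S = J_p^± S` and the combination vanishes at `S`. The segments `[t e₂, e₁]` and the
triangles `conv{o, e₁, t e₂}` tend to `S` as `t → 0⁺`; their normals `v` with `h(·, v) = 0` are
`-e₁`, `-e₂` and directions with face `{o}`, so the sums defining `E_p^±` and `F_p^±` have two
explicit terms. At `u = ±e₁` the combination takes the values `c₁/2`, `c₂/2` on the segments and
`(c₁ + c₃)/2`, `(c₂ + c₄)/2` on the triangles, independently of `t`, while it stays bounded on the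
unit circle (without a bound `sphSup` would be the junk value `0`); continuity at `S` forces all
four values to vanish.
-/

open Set

section PositivePartPowers

variable {n : ℕ}

lemma monotone_posPow {p : ℝ} (hp : 0 ≤ p) : Monotone fun r : ℝ => (max r 0) ^ p :=
  fun _ _ hab => Real.rpow_le_rpow (le_max_right _ _) (max_le_max hab le_rfl) hp

lemma posPow_nonneg (p r : ℝ) : 0 ≤ (max r 0) ^ p :=
  Real.rpow_nonneg (le_max_right _ _) p

lemma posPow_of_nonpos {p r : ℝ} (hp : p ≠ 0) (hr : r ≤ 0) : (max r 0) ^ p = 0 := by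
  rw [max_eq_right hr, Real.zero_rpow hp]

lemma posPow_inner_le_one {p : ℝ} (hp : 0 ≤ p) {x u : Eucl n} (hx : x ∈ closedBall 0 1)
    (hu : ‖u‖ = 1) : (max ⟪x, u⟫ 0) ^ p ≤ 1 := by
  have hxu : ⟪x, u⟫ ≤ 1 := by
    have := real_inner_le_norm x u
    rw [mem_closedBall_zero_iff] at hx
    nlinarith [norm_nonneg x]
  exact Real.rpow_le_one (le_max_right _ _) (max_le hxu zero_le_one) hp

lemma isLinearMap_inner_left (v : Eucl n) : IsLinearMap ℝ fun x : Eucl n => ⟪x, v⟫ :=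
  ⟨fun x y => inner_add_left x y v, fun c x => real_inner_smul_left x v c⟩

lemma IsGreatest.inner_convexHull {s : Set (Eucl n)} {v : Eucl n} {M : ℝ}
    (h : IsGreatest ((⟪·, v⟫) '' s) M) : IsGreatest ((⟪·, v⟫) '' convexHull ℝ s) M := by
  refine ⟨image_mono (subset_convexHull ℝ s) h.1, ?_⟩
  rintro _ ⟨x, hx, rfl⟩
  exact convexHull_min (fun y hy => h.2 ⟨y, hy, rfl⟩)
    (convex_halfSpace_le (isLinearMap_inner_left v) M) hx

lemma IsLeast.inner_convexHull {s : Set (Eucl n)} {v : Eucl n} {m : ℝ}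
    (h : IsLeast ((⟪·, v⟫) '' s) m) : IsLeast ((⟪·, v⟫) '' convexHull ℝ s) m := by
  refine ⟨image_mono (subset_convexHull ℝ s) h.1, ?_⟩
  rintro _ ⟨x, hx, rfl⟩
  exact convexHull_min (fun y hy => h.2 ⟨y, hy, rfl⟩)
    (convex_halfSpace_ge (isLinearMap_inner_left v) m) hx

lemma isGreatest_inner_segment (a b v : Eucl n) :
    IsGreatest ((⟪·, v⟫) '' segment ℝ a b) (max ⟪a, v⟫ ⟪b, v⟫) := by
  rw [← convexHull_pair]
  exact IsGreatest.inner_convexHull (by rw [image_pair]; exact isGreatest_pair)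

lemma isLeast_inner_segment (a b v : Eucl n) :
    IsLeast ((⟪·, v⟫) '' segment ℝ a b) (min ⟪a, v⟫ ⟪b, v⟫) := by
  rw [← convexHull_pair]
  exact IsLeast.inner_convexHull (by rw [image_pair]; exact isLeast_pair)

lemma IppF_of_isGreatest {p : ℝ} (hp : 0 ≤ p) {s : Set (Eucl n)} {u : Eucl n} {M : ℝ}
    (h : IsGreatest ((⟪·, u⟫) '' s) M) : IppF p s u = (max M 0) ^ p := by
  have := (monotone_posPow hp).map_isGreatest h
  rw [image_image] at this
  exact this.csSup_eq

lemma JppF_of_isLeast {p : ℝ} (hp : 0 ≤ p) {s : Set (Eucl n)} {u : Eucl n} {m : ℝ}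
    (h : IsLeast ((⟪·, u⟫) '' s) m) : JppF p s u = (max m 0) ^ p := by
  have := (monotone_posPow hp).map_isLeast h
  rw [image_image] at this
  exact this.csInf_eq

lemma IppF_singleton (p : ℝ) (x u : Eucl n) :
    IppF p {x} u = (max ⟪x, u⟫ 0) ^ p := by
  simp [IppF]

lemma JppF_singleton (p : ℝ) (x u : Eucl n) :
    JppF p {x} u = (max ⟪x, u⟫ 0) ^ p := by
  simp [JppF]

lemma IppF_eq_zero_of_inner_nonpos {p : ℝ} (hp : p ≠ 0) {s : Set (Eucl n)} {u : Eucl n}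
    (h : ∀ x ∈ s, ⟪x, u⟫ ≤ 0) : IppF p s u = 0 := by
  refine le_antisymm (Real.sSup_nonpos ?_) (Real.sSup_nonneg ?_)
  · rintro _ ⟨x, hx, rfl⟩
    exact (posPow_of_nonpos hp (h x hx)).le
  · rintro _ ⟨x, -, rfl⟩
    exact posPow_nonneg p _

lemma JppF_eq_zero_of_inner_nonpos {p : ℝ} (hp : p ≠ 0) {s : Set (Eucl n)} {u : Eucl n}
    (h : ∀ x ∈ s, ⟪x, u⟫ ≤ 0) : JppF p s u = 0 := by
  refine le_antisymm (Real.sInf_nonpos ?_) (Real.sInf_nonneg ?_)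
  · rintro _ ⟨x, hx, rfl⟩
    exact (posPow_of_nonpos hp (h x hx)).le
  · rintro _ ⟨x, -, rfl⟩
    exact posPow_nonneg p _

lemma JppF_eq_zero_of_zero_mem {p : ℝ} (hp : p ≠ 0) {s : Set (Eucl n)} (h0 : (0 : Eucl n) ∈ s)
    (u : Eucl n) : JppF p s u = 0 := by
  refine le_antisymm (Real.sInf_nonpos' ⟨0, ⟨0, h0, ?_⟩, le_rfl⟩) (Real.sInf_nonneg ?_)
  · simp [Real.zero_rpow hp]
  · rintro _ ⟨x, -, rfl⟩
    exact posPow_nonneg p _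

lemma IppF_mem_Icc {p : ℝ} (hp : 0 ≤ p) {s : Set (Eucl n)} (hs : s ⊆ closedBall 0 1)
    {u : Eucl n} (hu : ‖u‖ = 1) : IppF p s u ∈ Icc 0 1 := by
  refine ⟨Real.sSup_nonneg ?_, Real.sSup_le ?_ zero_le_one⟩ <;> rintro _ ⟨x, hx, rfl⟩
  exacts [posPow_nonneg p _, posPow_inner_le_one hp (hs hx) hu]

lemma JppF_mem_Icc {p : ℝ} (hp : 0 ≤ p) {s : Set (Eucl n)} (hs : s ⊆ closedBall 0 1)
    {u : Eucl n} (hu : ‖u‖ = 1) : JppF p s u ∈ Icc 0 1 := by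
  refine ⟨Real.sInf_nonneg ?_, ?_⟩
  · rintro _ ⟨x, -, rfl⟩
    exact posPow_nonneg p _
  rcases s.eq_empty_or_nonempty with rfl | ⟨x, hx⟩
  · simp [JppF]
  · exact csInf_le_of_le ⟨0, by rintro _ ⟨y, -, rfl⟩; exact posPow_nonneg p _⟩
      ⟨x, hx, rfl⟩ (posPow_inner_le_one hp (hs hx) hu)

end PositivePartPowers

section ZeroNormals

variable {n : ℕ}

lemma inner_le_suppFn {K : Set (Eucl n)} (hK : IsCompact K) {x : Eucl n} (hx : x ∈ K)
    (v : Eucl n) : ⟪x, v⟫ ≤ suppFn K v :=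
  le_csSup (hK.bddAbove_image (continuous_id.inner continuous_const).continuousOn) ⟨x, hx, rfl⟩

lemma suppFn_eq_zero {K : Set (Eucl n)} (h0 : (0 : Eucl n) ∈ K) {v : Eucl n}
    (h : ∀ x ∈ K, ⟪x, v⟫ ≤ 0) : suppFn K v = 0 :=
  IsGreatest.csSup_eq ⟨⟨0, h0, inner_zero_left v⟩, by rintro _ ⟨x, hx, rfl⟩; exact h x hx⟩

lemma inner_eq_of_mem_segment {a b v x : Eucl n} {c : ℝ} (ha : ⟪a, v⟫ = c) (hb : ⟪b, v⟫ = c)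
    (hx : x ∈ segment ℝ a b) : ⟪x, v⟫ = c := by
  have hmax := (isGreatest_inner_segment a b v).2 ⟨x, hx, rfl⟩
  have hmin := (isLeast_inner_segment a b v).2 ⟨x, hx, rfl⟩
  rw [ha, hb, max_self] at hmax
  rw [ha, hb, min_self] at hmin
  exact le_antisymm hmax hmin

lemma zero_mem_face {K : Set (Eucl n)} (h0 : (0 : Eucl n) ∈ K) {v : Eucl n}
    (hsupp : suppFn K v = 0) : (0 : Eucl n) ∈ face K v :=
  ⟨h0, by rw [hsupp, inner_zero_left]⟩

lemma face_eq_self {K : Set (Eucl n)} (hK : K.Nonempty) {v : Eucl n}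
    (h : ∀ x ∈ K, ⟪x, v⟫ = 0) : face K v = K := by
  obtain ⟨x₀, hx₀⟩ := hK
  have hsupp : suppFn K v = 0 :=
    IsGreatest.csSup_eq ⟨⟨x₀, hx₀, h x₀ hx₀⟩, by rintro _ ⟨x, hx, rfl⟩; exact (h x hx).le⟩
  exact sep_eq_self_iff_mem_true.mpr fun x hx => by rw [h x hx, hsupp]

lemma face_eq_singleton_zero {K : Set (Eucl n)} (h0 : (0 : Eucl n) ∈ K) {v : Eucl n}
    (hsupp : suppFn K v = 0) (h : ∀ x ∈ K, ⟪x, v⟫ = 0 → x = 0) : face K v = {0} :=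
  Subset.antisymm (fun x hx => h x hx.1 (hx.2.trans hsupp))
    (singleton_subset_iff.mpr (zero_mem_face h0 hsupp))

lemma suppFn_segment (a b v : Eucl n) : suppFn (segment ℝ a b) v = max ⟪a, v⟫ ⟪b, v⟫ :=
  (isGreatest_inner_segment a b v).csSup_eq

lemma face_segment_of_inner_lt {a b v : Eucl n} (h : ⟪b, v⟫ < ⟪a, v⟫) :
    face (segment ℝ a b) v = {a} := by
  have hsupp : suppFn (segment ℝ a b) v = ⟪a, v⟫ := by
    rw [suppFn_segment, max_eq_left h.le]
  refine Subset.antisymm ?_ (singleton_subset_iff.mpr ⟨left_mem_segment ℝ a b, hsupp.symm⟩)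
  rintro _ ⟨⟨α, β, hα, hβ, hαβ, rfl⟩, hx⟩
  rw [hsupp, inner_add_left, real_inner_smul_left, real_inner_smul_left] at hx
  obtain rfl : α = 1 - β := by linarith
  have hβ : β * (⟪a, v⟫ - ⟪b, v⟫) = 0 := by linarith
  obtain rfl : β = 0 := (mul_eq_zero.mp hβ).resolve_right (sub_ne_zero.mpr h.ne')
  simp

structure ZeroNormalPair (K : Set (Eucl n)) (a b : Eucl n) : Prop where
  ne : a ≠ b
  norm_left : ‖a‖ = 1
  norm_right : ‖b‖ = 1
  suppFn_left : suppFn K a = 0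
  suppFn_right : suppFn K b = 0
  face_other : ∀ v, ‖v‖ = 1 → suppFn K v = 0 → v ≠ a → v ≠ b → face K v = {0}

namespace ZeroNormalPair

variable {K : Set (Eucl n)} {a b : Eucl n}

lemma tsum_face (h : ZeroNormalPair K a b) (Φ : Set (Eucl n) → ℝ) (hΦ : Φ {0} = 0) :
    ∑' v : {v : Eucl n // ‖v‖ = 1 ∧ suppFn K v = 0}, Φ (face K v.1) =
      Φ (face K a) + Φ (face K b) := by
  classical
  let A : {v : Eucl n // ‖v‖ = 1 ∧ suppFn K v = 0} := ⟨a, h.norm_left, h.suppFn_left⟩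
  let B : {v : Eucl n // ‖v‖ = 1 ∧ suppFn K v = 0} := ⟨b, h.norm_right, h.suppFn_right⟩
  have hAB : A ≠ B := fun hAB => h.ne (congrArg Subtype.val hAB)
  rw [tsum_eq_sum (s := {A, B}), Finset.sum_pair hAB]
  intro v hv
  simp only [Finset.mem_insert, Finset.mem_singleton, not_or] at hv
  rw [h.face_other v v.2.1 v.2.2 (fun hv' => hv.1 (Subtype.ext hv'))
    (fun hv' => hv.2 (Subtype.ext hv')), hΦ]

lemma EppF_eq (h : ZeroNormalPair K a b) {p : ℝ} (hp : p ≠ 0) (u : Eucl n) :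
    EppF p K u = (IppF p (face K a) u + IppF p (face K b) u) / 2 := by
  have := h.tsum_face (IppF p · u) (by simp [IppF_singleton, Real.zero_rpow hp])
  calc EppF p K u
      = 1 / 2 * ∑' v : {v : Eucl n // ‖v‖ = 1 ∧ suppFn K v = 0},
          IppF p (face K v.1) u := rfl
    _ = _ := by rw [this]; ring

lemma FppF_eq (h : ZeroNormalPair K a b) {p : ℝ} (hp : p ≠ 0) (u : Eucl n) :
    FppF p K u = (JppF p (face K a) u + JppF p (face K b) u) / 2 := by
  have := h.tsum_face (JppF p · u) (by simp [JppF_singleton, Real.zero_rpow hp])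
  calc FppF p K u
      = 1 / 2 * ∑' v : {v : Eucl n // ‖v‖ = 1 ∧ suppFn K v = 0},
          JppF p (face K v.1) u := rfl
    _ = _ := by rw [this]; ring

lemma operators_eq_zero (h : ZeroNormalPair K a b) {p : ℝ} (hp : p ≠ 0) {u : Eucl n}
    (hu : ∀ x ∈ K, ⟪x, u⟫ ≤ 0) :
    IppF p K u = 0 ∧ EppF p K u = 0 ∧ JppF p K u = 0 ∧ FppF p K u = 0 := by
  have hface : ∀ v, ∀ x ∈ face K v, ⟪x, u⟫ ≤ 0 := fun v x hx => hu x hx.1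
  rw [h.EppF_eq hp, h.FppF_eq hp, IppF_eq_zero_of_inner_nonpos hp hu,
    IppF_eq_zero_of_inner_nonpos hp (hface a), IppF_eq_zero_of_inner_nonpos hp (hface b),
    JppF_eq_zero_of_inner_nonpos hp hu, JppF_eq_zero_of_inner_nonpos hp (hface a),
    JppF_eq_zero_of_inner_nonpos hp (hface b)]
  norm_num

end ZeroNormalPair

end ZeroNormals

section Combination

variable {n : ℕ}

lemma ImpF_eq_IppF_neg (p : ℝ) (K : Set (Eucl n)) (u : Eucl n) : ImpF p K u = IppF p K (-u) := by
  simp only [ImpF, IppF, inner_neg_right]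

lemma JmpF_eq_JppF_neg (p : ℝ) (K : Set (Eucl n)) (u : Eucl n) : JmpF p K u = JppF p K (-u) := by
  simp only [JmpF, JppF, inner_neg_right]

lemma EmpF_eq_EppF_neg (p : ℝ) (K : Set (Eucl n)) (u : Eucl n) : EmpF p K u = EppF p K (-u) := by
  simp only [EmpF, EppF, inner_neg_right]

lemma FmpF_eq_FppF_neg (p : ℝ) (K : Set (Eucl n)) (u : Eucl n) : FmpF p K u = FppF p K (-u) := by
  simp only [FmpF, FppF, inner_neg_right]

def opComb (p c₁ c₂ c₃ c₄ : ℝ) (P : Set (Eucl n)) (u : Eucl n) : ℝ :=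
  c₁ * (IppF p P u - EppF p P u) + c₂ * (ImpF p P u - EmpF p P u) +
    c₃ * (IppF p P u - EppF p P u + JppF p P u - FppF p P u) +
    c₄ * (ImpF p P u - EmpF p P u + JmpF p P u - FmpF p P u)

lemma opComb_eq (p c₁ c₂ c₃ c₄ : ℝ) (P : Set (Eucl n)) (u : Eucl n) :
    opComb p c₁ c₂ c₃ c₄ P u =
      c₁ * (IppF p P u - EppF p P u) + c₂ * (IppF p P (-u) - EppF p P (-u)) +
        c₃ * (IppF p P u - EppF p P u + JppF p P u - FppF p P u) +
        c₄ * (IppF p P (-u) - EppF p P (-u) + JppF p P (-u) - FppF p P (-u)) := by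
  rw [opComb, ImpF_eq_IppF_neg, EmpF_eq_EppF_neg, JmpF_eq_JppF_neg, FmpF_eq_FppF_neg]

lemma abs_linComb_le {c₁ c₂ c₃ c₄ x₁ x₂ x₃ x₄ M : ℝ} (h₁ : |x₁| ≤ M) (h₂ : |x₂| ≤ M)
    (h₃ : |x₃| ≤ M) (h₄ : |x₄| ≤ M) :
    |c₁ * x₁ + c₂ * x₂ + c₃ * x₃ + c₄ * x₄| ≤ M * (|c₁| + |c₂| + |c₃| + |c₄|) := by
  calc |c₁ * x₁ + c₂ * x₂ + c₃ * x₃ + c₄ * x₄|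
      ≤ |c₁| * |x₁| + |c₂| * |x₂| + |c₃| * |x₃| + |c₄| * |x₄| := by
        simp only [← abs_mul]
        exact (abs_add_le _ _).trans (by gcongr; exact abs_add_three _ _ _)
    _ ≤ |c₁| * M + |c₂| * M + |c₃| * M + |c₄| * M := by gcongr
    _ = M * (|c₁| + |c₂| + |c₃| + |c₄|) := by ring

lemma abs_opComb_le {p : ℝ} (hp : 0 < p) (c₁ c₂ c₃ c₄ : ℝ) {P : Set (Eucl n)} {a b : Eucl n}
    (hP : ZeroNormalPair P a b) (hball : P ⊆ closedBall 0 1) {u : Eucl n} (hu : ‖u‖ = 1) :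
    |opComb p c₁ c₂ c₃ c₄ P u| ≤ 2 * (|c₁| + |c₂| + |c₃| + |c₄|) := by
  have hface : ∀ v, face P v ⊆ closedBall 0 1 := fun v => (sep_subset _ _).trans hball
  have hdefects : ∀ w : Eucl n, ‖w‖ = 1 →
      |IppF p P w - EppF p P w| ≤ 2 ∧ |IppF p P w - EppF p P w + JppF p P w - FppF p P w| ≤ 2 := by
    intro w hw
    obtain ⟨hI₀, hI₁⟩ := IppF_mem_Icc hp.le hball hw
    obtain ⟨hJ₀, hJ₁⟩ := JppF_mem_Icc hp.le hball hw
    obtain ⟨hEa₀, hEa₁⟩ := IppF_mem_Icc hp.le (hface a) hw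
    obtain ⟨hEb₀, hEb₁⟩ := IppF_mem_Icc hp.le (hface b) hw
    obtain ⟨hFa₀, hFa₁⟩ := JppF_mem_Icc hp.le (hface a) hw
    obtain ⟨hFb₀, hFb₁⟩ := JppF_mem_Icc hp.le (hface b) hw
    rw [hP.EppF_eq hp.ne', hP.FppF_eq hp.ne']
    constructor <;> rw [abs_le] <;> constructor <;> linarith
  have hu' : ‖-u‖ = 1 := by rwa [norm_neg]
  rw [opComb_eq]
  exact abs_linComb_le (hdefects u hu).1 (hdefects (-u) hu').1 (hdefects u hu).2
    (hdefects (-u) hu').2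

lemma abs_le_sphSup {f : Eucl n → ℝ} {C : ℝ} (hC : ∀ u : Eucl n, ‖u‖ = 1 → |f u| ≤ C)
    {u₀ : Eucl n} (hu₀ : ‖u₀‖ = 1) : |f u₀| ≤ sphSup f :=
  le_ciSup (f := fun u : sphere (0 : Eucl n) 1 => |f u.1|)
    ⟨C, by rintro _ ⟨u, rfl⟩; exact hC u (mem_sphere_zero_iff_norm.mp u.2)⟩
    ⟨u₀, mem_sphere_zero_iff_norm.mpr hu₀⟩

lemma eq_zero_of_approx {F : Set (Eucl n) → Eucl n → ℝ} {S : Set (Eucl n)}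
    (hcont : ∀ ε > (0:ℝ), ∃ δ > (0:ℝ), ∀ P : Set (Eucl n), IsPolytope P →
      hausdorffDist P S < δ → sphSup (fun u => F P u - F S u) < ε)
    {u₀ : Eucl n} (hu₀ : ‖u₀‖ = 1) {a : ℝ}
    (happrox : ∀ δ > (0:ℝ), ∃ P, IsPolytope P ∧ hausdorffDist P S < δ ∧
      (∃ C, ∀ u : Eucl n, ‖u‖ = 1 → |F P u - F S u| ≤ C) ∧ F P u₀ - F S u₀ = a) :
    a = 0 := by
  by_contra ha
  obtain ⟨δ, hδ, hclose⟩ := hcont |a| (abs_pos.mpr ha)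
  obtain ⟨P, hPoly, hdist, ⟨C, hC⟩, hval⟩ := happrox δ hδ
  have := abs_le_sphSup hC hu₀
  rw [hval] at this
  exact (this.trans_lt (hclose P hPoly hdist)).false

end Combination

section HausdorffDistance

variable {E : Type*} [NormedAddCommGroup E] [NormedSpace ℝ E]

lemma hausdorffDist_segment_le (a a' b : E) :
    hausdorffDist (segment ℝ a b) (segment ℝ a' b) ≤ dist a a' := by
  have key : ∀ a a' : E, ∀ x ∈ segment ℝ a b, ∃ y ∈ segment ℝ a' b, dist x y ≤ dist a a' := by
    rintro a a' _ ⟨α, β, hα, hβ, hαβ, rfl⟩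
    refine ⟨α • a' + β • b, ⟨α, β, hα, hβ, hαβ, rfl⟩, ?_⟩
    rw [dist_eq_norm, add_sub_add_right_eq_sub, ← smul_sub, norm_smul, Real.norm_of_nonneg hα,
      ← dist_eq_norm]
    exact mul_le_of_le_one_left dist_nonneg (by linarith)
  refine hausdorffDist_le_of_mem_dist dist_nonneg (key a a') fun x hx => ?_
  rw [dist_comm]
  exact key a' a x hx

lemma hausdorffDist_convexJoin_le {s : Set E} (hs : Convex ℝ s) (h0 : (0 : E) ∈ s) (x : E) :
    hausdorffDist (convexJoin ℝ {x} s) s ≤ ‖x‖ := by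
  refine hausdorffDist_le_of_mem_dist (norm_nonneg x) ?_ fun z hz =>
    ⟨z, subset_convexJoin_right (singleton_nonempty x) hz, by simp⟩
  rintro y hy
  obtain ⟨w, hw, z, hz, α, β, hα, hβ, hαβ, rfl⟩ := mem_convexJoin.mp hy
  rw [mem_singleton_iff] at hw
  subst w
  refine ⟨β • z, hs.smul_mem_of_zero_mem h0 hz ⟨hβ, by linarith⟩, ?_⟩
  rw [dist_eq_norm, add_sub_cancel_right, norm_smul, Real.norm_of_nonneg hα]
  exact mul_le_of_le_one_left (norm_nonneg x) (by linarith)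

end HausdorffDistance

section Plane

def e₁ : Eucl 2 := EuclideanSpace.single 0 1

def e₂ : Eucl 2 := EuclideanSpace.single 1 1

@[simp] lemma inner_e₁_right (x : Eucl 2) : ⟪x, e₁⟫ = x 0 := by
  simp [e₁, EuclideanSpace.inner_single_right]

@[simp] lemma inner_e₂_right (x : Eucl 2) : ⟪x, e₂⟫ = x 1 := by
  simp [e₂, EuclideanSpace.inner_single_right]

@[simp] lemma inner_e₁_left (x : Eucl 2) : ⟪e₁, x⟫ = x 0 := by
  simp [e₁, EuclideanSpace.inner_single_left]

@[simp] lemma inner_e₂_left (x : Eucl 2) : ⟪e₂, x⟫ = x 1 := by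
  simp [e₂, EuclideanSpace.inner_single_left]

@[simp] lemma e₁_apply_zero : e₁ 0 = 1 := by simp [e₁]
@[simp] lemma e₁_apply_one : e₁ 1 = 0 := by simp [e₁]
@[simp] lemma e₂_apply_zero : e₂ 0 = 0 := by simp [e₂]
@[simp] lemma e₂_apply_one : e₂ 1 = 1 := by simp [e₂]

@[simp] lemma norm_e₁ : ‖e₁‖ = 1 := by simp [e₁]
@[simp] lemma norm_e₂ : ‖e₂‖ = 1 := by simp [e₂]

lemma inner_eq_coord (x v : Eucl 2) : ⟪x, v⟫ = x 0 * v 0 + x 1 * v 1 := by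
  simp [PiLp.inner_apply, Fin.sum_univ_two, mul_comm]

lemma eq_of_coord {x y : Eucl 2} (h0 : x 0 = y 0) (h1 : x 1 = y 1) : x = y := by
  ext i; fin_cases i <;> assumption

lemma coord_sq_add_sq {v : Eucl 2} (hv : ‖v‖ = 1) : v 0 ^ 2 + v 1 ^ 2 = 1 := by
  have h := real_inner_self_eq_norm_sq v
  rw [hv, inner_eq_coord] at h
  linarith

lemma eq_e₂_or_eq_neg_e₂ {v : Eucl 2} (hv : ‖v‖ = 1) (h0 : v 0 = 0) : v = e₂ ∨ v = -e₂ := by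
  have : v 1 ^ 2 = 1 := by nlinarith [coord_sq_add_sq hv]
  rcases sq_eq_one_iff.mp this with h1 | h1
  · exact .inl (eq_of_coord (by simp [h0]) (by simp [h1]))
  · exact .inr (eq_of_coord (by simp [h0]) (by simp [h1]))

lemma unit_of_nonpos_coords {v : Eucl 2} (hv : ‖v‖ = 1) (h0 : v 0 ≤ 0) (h1 : v 1 ≤ 0) :
    v = -e₁ ∨ v = -e₂ ∨ (v 0 < 0 ∧ v 1 < 0) := by
  have hsq := coord_sq_add_sq hv
  rcases h0.lt_or_eq with h0 | h0
  · rcases h1.lt_or_eq with h1 | h1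
    · exact .inr (.inr ⟨h0, h1⟩)
    · have : v 0 = -1 := by nlinarith
      exact .inl (eq_of_coord (by simp [this]) (by simp [h1]))
  · have : v 1 = -1 := by nlinarith
    exact .inr (.inl (eq_of_coord (by simp [h0]) (by simp [this])))

lemma neg_e₁_ne_neg_e₂ : -e₁ ≠ -e₂ := fun h => by simpa using congrArg (· 0) h

lemma e₂_ne_neg_e₂ : e₂ ≠ -e₂ := fun h => by
  have := congrArg (· 1) h; norm_num at this

end Plane

section Approximants

lemma zeroNormalPair_base : ZeroNormalPair (segment ℝ 0 e₁) e₂ (-e₂) where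
  ne := e₂_ne_neg_e₂
  norm_left := norm_e₂
  norm_right := by simp
  suppFn_left := by simp [suppFn_segment]
  suppFn_right := by simp [suppFn_segment]
  face_other v hv hsupp hne hne' := by
    rw [suppFn_segment, inner_zero_left, inner_e₁_left] at hsupp
    have hv0 : v 0 < 0 := by
      refine (le_of_max_le_right hsupp.le).lt_of_ne fun h0 => ?_
      rcases eq_e₂_or_eq_neg_e₂ hv h0 with h | h <;> contradiction
    exact face_segment_of_inner_lt (by simpa using hv0)

lemma face_base {v : Eucl 2} (hv : v 0 = 0) : face (segment ℝ 0 e₁) v = segment ℝ 0 e₁ :=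
  face_eq_self ⟨0, left_mem_segment ℝ 0 e₁⟩ fun _ hx =>
    inner_eq_of_mem_segment (inner_zero_left v) (by simp [hv]) hx

lemma opComb_base {p : ℝ} (hp : p ≠ 0) (c₁ c₂ c₃ c₄ : ℝ) (u : Eucl 2) :
    opComb p c₁ c₂ c₃ c₄ (segment ℝ 0 e₁) u = 0 := by
  simp only [opComb_eq, zeroNormalPair_base.EppF_eq hp, zeroNormalPair_base.FppF_eq hp,
    face_base e₂_apply_zero, face_base (by simp : (-e₂) 0 = 0)]
  ring

lemma zeroNormalPair_tilted {t : ℝ} (ht : 0 < t) :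
    ZeroNormalPair (segment ℝ (t • e₂) e₁) (-e₁) (-e₂) where
  ne := neg_e₁_ne_neg_e₂
  norm_left := by simp
  norm_right := by simp
  suppFn_left := by simp [suppFn_segment, real_inner_smul_left]
  suppFn_right := by simp [suppFn_segment, real_inner_smul_left, ht.le]
  face_other v hv hsupp hne hne' := by
    rw [suppFn_segment, real_inner_smul_left, inner_e₂_left, inner_e₁_left] at hsupp
    have h1 : v 1 ≤ 0 := nonpos_of_mul_nonpos_right (hsupp ▸ le_max_left _ _) ht
    rcases unit_of_nonpos_coords hv (hsupp ▸ le_max_right _ _) h1 with h | h | ⟨h0, h1⟩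
    · exact absurd h hne
    · exact absurd h hne'
    · linarith [max_lt (mul_neg_of_pos_of_neg ht h1) h0]

lemma opComb_tilted {p : ℝ} (hp : 0 < p) (c₁ c₂ c₃ c₄ : ℝ) {t : ℝ} (ht : 0 < t) :
    opComb p c₁ c₂ c₃ c₄ (segment ℝ (t • e₂) e₁) e₁ = c₁ / 2 ∧
      opComb p c₁ c₂ c₃ c₄ (segment ℝ (t • e₂) e₁) (-e₁) = c₂ / 2 := by
  have hP := zeroNormalPair_tilted ht
  obtain ⟨hI, hE, hJ, hF⟩ := hP.operators_eq_zero hp.ne' (u := -e₁) fun x hx => by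
    simpa [real_inner_smul_left] using
      (isGreatest_inner_segment (t • e₂) e₁ (-e₁)).2 ⟨x, hx, rfl⟩
  have hface₁ : face (segment ℝ (t • e₂) e₁) (-e₁) = {t • e₂} :=
    face_segment_of_inner_lt (by simp [real_inner_smul_left])
  have hface₂ : face (segment ℝ (t • e₂) e₁) (-e₂) = {e₁} := by
    rw [segment_symm]
    exact face_segment_of_inner_lt (by simp [real_inner_smul_left, ht])
  have hI₁ : IppF p (segment ℝ (t • e₂) e₁) e₁ = 1 := by
    simp [IppF_of_isGreatest hp.le (isGreatest_inner_segment _ _ _), real_inner_smul_left]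
  have hJ₁ : JppF p (segment ℝ (t • e₂) e₁) e₁ = 0 := by
    simp [JppF_of_isLeast hp.le (isLeast_inner_segment _ _ _), real_inner_smul_left,
      Real.zero_rpow hp.ne']
  have hE₁ : EppF p (segment ℝ (t • e₂) e₁) e₁ = 1 / 2 := by
    simp [hP.EppF_eq hp.ne', hface₁, hface₂, IppF_singleton, real_inner_smul_left,
      Real.zero_rpow hp.ne']
  have hF₁ : FppF p (segment ℝ (t • e₂) e₁) e₁ = 1 / 2 := by
    simp [hP.FppF_eq hp.ne', hface₁, hface₂, JppF_singleton, real_inner_smul_left,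
      Real.zero_rpow hp.ne']
  constructor <;> simp only [opComb_eq, neg_neg, hI, hE, hJ, hF, hI₁, hJ₁, hE₁, hF₁] <;> ring

lemma coords_of_mem_triangle {t : ℝ} (ht : 0 ≤ t) {x : Eucl 2}
    (hx : x ∈ convexHull ℝ {t • e₂, 0, e₁}) : 0 ≤ x 0 ∧ x 0 ≤ 1 ∧ 0 ≤ x 1 := by
  have hconv : Convex ℝ ({y : Eucl 2 | 0 ≤ ⟪y, e₁⟫} ∩ ({y | ⟪y, e₁⟫ ≤ 1} ∩ {y | 0 ≤ ⟪y, e₂⟫})) :=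
    (convex_halfSpace_ge (isLinearMap_inner_left e₁) 0).inter
      ((convex_halfSpace_le (isLinearMap_inner_left e₁) 1).inter
        (convex_halfSpace_ge (isLinearMap_inner_left e₂) 0))
  simpa using convexHull_min (by rintro y (rfl | rfl | rfl) <;> simp [ht]) hconv hx

lemma zeroNormalPair_triangle {t : ℝ} (ht : 0 < t) :
    ZeroNormalPair (convexHull ℝ {t • e₂, 0, e₁}) (-e₁) (-e₂) where
  ne := neg_e₁_ne_neg_e₂
  norm_left := by simp
  norm_right := by simp
  suppFn_left := suppFn_eq_zero (subset_convexHull ℝ _ (by simp)) fun x hx => by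
    simpa using (coords_of_mem_triangle ht.le hx).1
  suppFn_right := suppFn_eq_zero (subset_convexHull ℝ _ (by simp)) fun x hx => by
    simpa using (coords_of_mem_triangle ht.le hx).2.2
  face_other v hv hsupp hne hne' := by
    have hK : IsCompact (convexHull ℝ {t • e₂, 0, e₁}) :=
      (toFinite _).isCompact_convexHull (𝕜 := ℝ)
    have h0 : v 0 ≤ 0 := by
      simpa [hsupp] using inner_le_suppFn hK (subset_convexHull ℝ _ (by simp : e₁ ∈ _)) v
    have h1 : v 1 ≤ 0 := nonpos_of_mul_nonpos_right (by
      simpa [hsupp, real_inner_smul_left] using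
        inner_le_suppFn hK (subset_convexHull ℝ _ (mem_insert _ _)) v) ht
    rcases unit_of_nonpos_coords hv h0 h1 with h | h | ⟨h0, h1⟩
    · exact absurd h hne
    · exact absurd h hne'
    refine face_eq_singleton_zero (subset_convexHull ℝ _ (by simp)) hsupp fun x hx hxv => ?_
    obtain ⟨hx0, -, hx1⟩ := coords_of_mem_triangle ht.le hx
    rw [inner_eq_coord] at hxv
    have hx0' : x 0 = 0 := by nlinarith
    have hx1' : x 1 = 0 := by nlinarith
    exact eq_of_coord (by simp [hx0']) (by simp [hx1'])

lemma opComb_triangle {p : ℝ} (hp : 0 < p) (c₁ c₂ c₃ c₄ : ℝ) {t : ℝ} (ht : 0 < t) :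
    opComb p c₁ c₂ c₃ c₄ (convexHull ℝ {t • e₂, 0, e₁}) e₁ = (c₁ + c₃) / 2 ∧
      opComb p c₁ c₂ c₃ c₄ (convexHull ℝ {t • e₂, 0, e₁}) (-e₁) = (c₂ + c₄) / 2 := by
  set T := convexHull ℝ {t • e₂, 0, e₁}
  have hP : ZeroNormalPair T (-e₁) (-e₂) := zeroNormalPair_triangle ht
  have hT0 : (0 : Eucl 2) ∈ T := subset_convexHull ℝ _ (by simp)
  have he₁ : e₁ ∈ T := subset_convexHull ℝ _ (by simp)
  have hmax : IsGreatest ((⟪·, e₁⟫) '' T) 1 :=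
    ⟨⟨e₁, he₁, by simp⟩, by
      rintro _ ⟨x, hx, rfl⟩
      simpa using (coords_of_mem_triangle ht.le hx).2.1⟩
  obtain ⟨hI, hE, hJ, hF⟩ := hP.operators_eq_zero hp.ne' (u := -e₁) fun x hx => by
    simpa using (coords_of_mem_triangle ht.le hx).1
  have hI₁ : IppF p T e₁ = 1 := by simp [IppF_of_isGreatest hp.le hmax]
  have hE₁ : EppF p T e₁ = 1 / 2 := by
    have hface₁ : IppF p (face T (-e₁)) e₁ = 0 :=
      IppF_eq_zero_of_inner_nonpos hp.ne' fun x hx => by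
        have hx0 : x 0 = 0 := by simpa [hP.suppFn_left] using hx.2
        simp [hx0]
    have hmax₂ : IsGreatest ((⟪·, e₁⟫) '' face T (-e₂)) 1 :=
      ⟨⟨e₁, ⟨he₁, by simp [hP.suppFn_right]⟩, by simp⟩,
        fun _ hy => hmax.2 (image_mono (sep_subset _ _) hy)⟩
    have hface₂ : IppF p (face T (-e₂)) e₁ = 1 := by simp [IppF_of_isGreatest hp.le hmax₂]
    rw [hP.EppF_eq hp.ne', hface₁, hface₂]
    norm_num
  have hF₁ : FppF p T e₁ = 0 := by
    rw [hP.FppF_eq hp.ne', JppF_eq_zero_of_zero_mem hp.ne' (zero_mem_face hT0 hP.suppFn_left),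
      JppF_eq_zero_of_zero_mem hp.ne' (zero_mem_face hT0 hP.suppFn_right)]
    norm_num
  have hJ₁ : JppF p T e₁ = 0 := JppF_eq_zero_of_zero_mem hp.ne' hT0 e₁
  constructor <;> simp only [opComb_eq, neg_neg, hI, hE, hJ, hF, hI₁, hJ₁, hE₁, hF₁] <;> ring

end Approximants

section TestPolytopes

structure IsTestPolytope (Q : Set (Eucl 2)) (t : ℝ) : Prop where
  isPolytope : IsPolytope Q
  hausdorffDist_le : hausdorffDist Q (segment ℝ 0 e₁) ≤ t
  zeroNormalPair : ZeroNormalPair Q (-e₁) (-e₂)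
  subset_closedBall : Q ⊆ closedBall 0 1

lemma isTestPolytope_tilted {t : ℝ} (ht : 0 < t) (ht₁ : t ≤ 1) :
    IsTestPolytope (segment ℝ (t • e₂) e₁) t where
  isPolytope := by
    classical
    exact ⟨{t • e₂, e₁}, by simp, by rw [← convexHull_pair]; simp⟩
  hausdorffDist_le := by
    simpa [norm_smul, abs_of_pos ht] using hausdorffDist_segment_le (t • e₂) 0 e₁
  zeroNormalPair := zeroNormalPair_tilted ht
  subset_closedBall := (convex_closedBall 0 1).segment_subset
    (by simp [norm_smul, abs_of_pos ht, ht₁]) (by simp)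

lemma isTestPolytope_triangle {t : ℝ} (ht : 0 < t) (ht₁ : t ≤ 1) :
    IsTestPolytope (convexHull ℝ {t • e₂, 0, e₁}) t where
  isPolytope := by
    classical
    exact ⟨{t • e₂, 0, e₁}, by simp, by simp⟩
  hausdorffDist_le := by
    rw [convexHull_insert (insert_nonempty 0 {e₁}), convexHull_pair]
    simpa [norm_smul, abs_of_pos ht] using
      hausdorffDist_convexJoin_le (convex_segment 0 e₁) (left_mem_segment ℝ 0 e₁) (t • e₂)
  zeroNormalPair := zeroNormalPair_triangle ht
  subset_closedBall := convexHull_min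
    (by rintro x (rfl | rfl | rfl) <;> simp [norm_smul, abs_of_pos ht, ht₁]) (convex_closedBall 0 1)

lemma eq_zero_of_isTestPolytope {p : ℝ} (hp : 0 < p) {c₁ c₂ c₃ c₄ : ℝ}
    (hcont : ∀ ε > (0:ℝ), ∃ δ > (0:ℝ), ∀ P : Set (Eucl 2), IsPolytope P →
      hausdorffDist P (segment ℝ 0 e₁) < δ →
      sphSup (fun u => opComb p c₁ c₂ c₃ c₄ P u - opComb p c₁ c₂ c₃ c₄ (segment ℝ 0 e₁) u) < ε)
    {Q : ℝ → Set (Eucl 2)} (hQ : ∀ t ∈ Ioc (0 : ℝ) 1, IsTestPolytope (Q t) t)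
    {u₀ : Eucl 2} (hu₀ : ‖u₀‖ = 1) {a : ℝ}
    (hval : ∀ t ∈ Ioc (0 : ℝ) 1, opComb p c₁ c₂ c₃ c₄ (Q t) u₀ = a) : a = 0 := by
  refine eq_zero_of_approx hcont hu₀ fun δ hδ => ?_
  obtain ⟨t, ht, htδ⟩ : ∃ t ∈ Ioc (0 : ℝ) 1, t < δ :=
    ⟨min (δ / 2) 1, ⟨by positivity, min_le_right _ _⟩, by linarith [min_le_left (δ / 2) 1]⟩
  have hQt := hQ t ht
  refine ⟨Q t, hQt.isPolytope, hQt.hausdorffDist_le.trans_lt htδ,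
    ⟨2 * (|c₁| + |c₂| + |c₃| + |c₄|), fun u hu => ?_⟩, ?_⟩ <;> rw [opComb_base hp.ne', sub_zero]
  · exact abs_opComb_le hp _ _ _ _ hQt.zeroNormalPair hQt.subset_closedBall hu
  · exact hval t ht

end TestPolytopes

/-- The only linear combination of the four maps
`P ↦ h(I_p⁺P,·)^p − h(E_p⁺P,·)^p`, `P ↦ h(I_p⁻P,·)^p − h(E_p⁻P,·)^p`,
`P ↦ h(I_p⁺P,·)^p − h(E_p⁺P,·)^p + J_p⁺P − F_p⁺P` and
`P ↦ h(I_p⁻P,·)^p − h(E_p⁻P,·)^p + J_p⁻P − F_p⁻P` (as maps from `𝒫²` to `C_p(ℝ²)`)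
that is continuous at the line segment `[o, e₁]` is the trivial one. -/
theorem statement_8 (p : ℝ) (hp : 1 < p) (c₁ c₂ c₃ c₄ : ℝ)
    (G : Set (Eucl 2) → Eucl 2 → ℝ)
    (hG : ∀ (P : Set (Eucl 2)) (u : Eucl 2),
      G P u = c₁ * (IppF p P u - EppF p P u) + c₂ * (ImpF p P u - EmpF p P u) +
        c₃ * (IppF p P u - EppF p P u + JppF p P u - FppF p P u) +
        c₄ * (ImpF p P u - EmpF p P u + JmpF p P u - FmpF p P u))
    (hcont : ∀ ε > (0:ℝ), ∃ δ > (0:ℝ), ∀ P : Set (Eucl 2), IsPolytope P →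
      hausdorffDist P (segment ℝ (0 : Eucl 2) (EuclideanSpace.single (0 : Fin 2) (1:ℝ))) < δ →
      sphSup (fun u =>
        G P u - G (segment ℝ (0 : Eucl 2) (EuclideanSpace.single (0 : Fin 2) (1:ℝ))) u) < ε) :
    c₁ = 0 ∧ c₂ = 0 ∧ c₃ = 0 ∧ c₄ = 0 := by
  have hp₀ : 0 < p := by linarith
  obtain rfl : G = opComb p c₁ c₂ c₃ c₄ := funext₂ hG
  have hneg : ‖-e₁‖ = 1 := by simp
  have h₁ := eq_zero_of_isTestPolytope hp₀ hcont (fun t ht => isTestPolytope_tilted ht.1 ht.2)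
    norm_e₁ fun t ht => (opComb_tilted hp₀ c₁ c₂ c₃ c₄ ht.1).1
  have h₂ := eq_zero_of_isTestPolytope hp₀ hcont (fun t ht => isTestPolytope_tilted ht.1 ht.2)
    hneg fun t ht => (opComb_tilted hp₀ c₁ c₂ c₃ c₄ ht.1).2
  have h₃ := eq_zero_of_isTestPolytope hp₀ hcont (fun t ht => isTestPolytope_triangle ht.1 ht.2)
    norm_e₁ fun t ht => (opComb_triangle hp₀ c₁ c₂ c₃ c₄ ht.1).1
  have h₄ := eq_zero_of_isTestPolytope hp₀ hcont (fun t ht => isTestPolytope_triangle ht.1 ht.2)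
    hneg fun t ht => (opComb_triangle hp₀ c₁ c₂ c₃ c₄ ht.1).2
  exact ⟨by linarith, by linarith, by linarith, by linarith⟩
end
end
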